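/- arXiv:1806.07762 — 2 statements merged into one kernel-verified Lean document; each statement's English description precedes it below -/
import Mathlib

section
/- Let m be a nonnegative integer. Then (-1)^{m+1} · π^{2m+2}/(4·(2m+1)!) + Σ_{k=0}^{m} (-1)^k (1 + δ_k) · π^{2k}/(2k)! · λ(2m-2k+2) = 0, where δ_k = 1 if k = 0 and δ_k = 0 if k ≠ 0. -/
open Real Finset

/-- The Dirichlet lambda function at a natural-number argument `j`:
`λ(j) = ∑_{n=0}^∞ 1/(2n+1)^j`. -/
noncomputable def dirichletLambda (j : ℕ) : ℝ := ∑' n : ℕ, 1 / (2 * (n : ℝ) + 1) ^ j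

/-!
Since `λ(2j) = (1 - 2⁻²ʲ) ζ(2j)`, Euler's evaluation of `ζ(2j)` gives
`λ(2j) = (-1)ʲ⁺¹ π²ʲ t₂ⱼ / 4`, where `t₂ⱼ` is the coefficient of `x²ʲ` in `x tanh (x / 2)`.
The recurrence is then the coefficient of `x²ᵐ⁺²` in the formal identity
`(2 + eˣ + e⁻ˣ) · x tanh (x / 2) = x (eˣ - e⁻ˣ)`, i.e. `(1 + cosh x) tanh (x / 2) = sinh x`,
whose left factor has only even coefficients.
-/

open PowerSeries

theorem Finset.sum_range_two_mul_add_one_of_odd_eq_zero {M : Type*} [AddCommMonoid M]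
    {f : ℕ → M} (hf : ∀ i, Odd i → f i = 0) (n : ℕ) :
    ∑ i ∈ range (2 * n + 1), f i = ∑ k ∈ range (n + 1), f (2 * k) := by
  induction n with
  | zero => simp
  | succ n ih =>
    rw [show 2 * (n + 1) + 1 = 2 * n + 1 + 1 + 1 by ring, sum_range_succ, sum_range_succ, ih,
      hf _ (odd_two_mul_add_one n), add_zero, sum_range_succ _ (n + 1)]
    rfl

section XTanhHalf

variable (K : Type*) [Field K] [CharZero K]

/-- `x tanh (x / 2) = x - 2x / (eˣ + 1)`, written through the Bernoulli series `x / (eˣ - 1)`. -/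
noncomputable def xTanhHalf : K⟦X⟧ :=
  2 * (rescale 2 (bernoulliPowerSeries K) - bernoulliPowerSeries K) + X

variable {K}

theorem coeff_xTanhHalf (n : ℕ) :
    coeff n (xTanhHalf K) =
      2 * (2 ^ n - 1) * bernoulli n / n.factorial + if n = 1 then 1 else 0 := by
  rw [xTanhHalf, ← map_ofNat (C (R := K)) 2]
  simp [coeff_C_mul, bernoulliPowerSeries, coeff_rescale, coeff_X]
  ring

theorem coeff_xTanhHalf_zero : coeff 0 (xTanhHalf K) = 0 := by
  simp [coeff_xTanhHalf]

theorem coeff_xTanhHalf_of_odd {n : ℕ} (hn : Odd n) : coeff n (xTanhHalf K) = 0 := by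
  rw [coeff_xTanhHalf]
  rcases eq_or_ne n 1 with rfl | hn1
  · norm_num
  · rw [bernoulli_eq_bernoulli'_of_ne_one hn1,
      bernoulli'_eq_zero_of_odd hn (by rcases hn with ⟨k, rfl⟩; omega)]
    simp [hn1]

theorem coeff_two_add_exp_add_exp_neg (i : ℕ) :
    coeff i (2 + exp K + rescale (-1 : K) (exp K)) =
      (if i = 0 then 2 else 0) + (1 + (-1 : K) ^ i) / i.factorial := by
  rw [← map_ofNat (C (R := K)) 2]
  simp [coeff_C, coeff_rescale, coeff_exp]
  split_ifs <;> ring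

theorem coeff_exp_sub_exp_neg (i : ℕ) :
    coeff i (exp K - rescale (-1 : K) (exp K)) = (1 - (-1 : K) ^ i) / i.factorial := by
  simp [coeff_rescale, coeff_exp]
  ring

variable (K)

theorem rescale_neg_one_xTanhHalf : rescale (-1 : K) (xTanhHalf K) = xTanhHalf K := by
  ext n
  rw [coeff_rescale]
  rcases Nat.even_or_odd n with hn | hn
  · rw [hn.neg_one_pow, one_mul]
  · rw [coeff_xTanhHalf_of_odd hn, mul_zero]

theorem exp_add_one_mul_xTanhHalf : (exp K + 1) * xTanhHalf K = X * (exp K - 1) := by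
  have hne : exp K - 1 ≠ 0 := fun h ↦ by simpa using congrArg (coeff 1) h
  have hB := bernoulliPowerSeries_mul_exp_sub_one K
  have hexp2 : rescale (2 : K) (exp K) = exp K * exp K := by
    rw [← one_add_one_eq_two, ← exp_mul_exp_eq_exp_add, rescale_one, RingHom.id_apply]
  have hB2 := congrArg (rescale (2 : K)) hB
  rw [map_mul, map_sub, map_one, hexp2, rescale_X, map_ofNat] at hB2
  apply mul_left_cancel₀ hne
  rw [xTanhHalf]
  linear_combination 2 * hB2 - (2 * exp K + 2) * hB

theorem two_add_exp_add_exp_neg_mul_xTanhHalf :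
    (2 + exp K + rescale (-1 : K) (exp K)) * xTanhHalf K =
      X * (exp K - rescale (-1 : K) (exp K)) := by
  have h := congrArg (rescale (-1 : K)) (exp_add_one_mul_xTanhHalf K)
  rw [map_mul, map_mul, map_add, map_sub, map_one, rescale_X, rescale_neg_one_xTanhHalf K,
    map_neg, map_one] at h
  linear_combination exp_add_one_mul_xTanhHalf K + h

theorem sum_range_div_factorial_mul_coeff_xTanhHalf (m : ℕ) :
    ∑ k ∈ range (m + 1), (1 + if k = 0 then (1 : K) else 0) / (2 * k).factorial *
      coeff (2 * m - 2 * k + 2) (xTanhHalf K) = 1 / (2 * m + 1).factorial := by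
  have hodd (i : ℕ) (hi : Odd i) :
      coeff i (2 + exp K + rescale (-1 : K) (exp K)) * coeff (2 * m + 2 - i) (xTanhHalf K) =
        0 := by
    rw [coeff_two_add_exp_add_exp_neg, if_neg hi.pos.ne', hi.neg_one_pow]
    simp
  have heven (k : ℕ) (hk : k ∈ range (m + 1)) :
      coeff (2 * k) (2 + exp K + rescale (-1 : K) (exp K)) *
          coeff (2 * m + 2 - 2 * k) (xTanhHalf K) =
        2 * ((1 + if k = 0 then (1 : K) else 0) / (2 * k).factorial *
          coeff (2 * m - 2 * k + 2) (xTanhHalf K)) := by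
    rw [coeff_two_add_exp_add_exp_neg, (even_two_mul k).neg_one_pow,
      show 2 * m + 2 - 2 * k = 2 * m - 2 * k + 2 by grind]
    rcases eq_or_ne k 0 with rfl | hk0
    · norm_num
      ring
    · simp only [hk0, if_false, mul_eq_zero, OfNat.ofNat_ne_zero, false_or]
      ring
  have h := congrArg (coeff (2 * m + 2)) (two_add_exp_add_exp_neg_mul_xTanhHalf K)
  rw [coeff_mul, Nat.sum_antidiagonal_eq_sum_range_succ_mk] at h
  simp only at h
  rw [show (2 * m + 2).succ = 2 * (m + 1) + 1 by omega,
    sum_range_two_mul_add_one_of_odd_eq_zero hodd, sum_range_succ,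
    show 2 * m + 2 - 2 * (m + 1) = 0 by omega, coeff_xTanhHalf_zero, mul_zero, add_zero,
    sum_congr rfl heven, ← mul_sum, coeff_succ_X_mul, coeff_exp_sub_exp_neg,
    (odd_two_mul_add_one m).neg_one_pow] at h
  linear_combination h / 2

end XTanhHalf

theorem hasSum_one_div_two_mul_add_one_pow {k : ℕ} {a : ℝ}
    (h : HasSum (fun n : ℕ ↦ 1 / (n : ℝ) ^ k) a) :
    HasSum (fun n : ℕ ↦ 1 / (2 * n + 1 : ℝ) ^ k) ((1 - 1 / 2 ^ k) * a) := by
  have heven : HasSum (fun n : ℕ ↦ 1 / ((2 * n : ℕ) : ℝ) ^ k) (1 / 2 ^ k * a) := by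
    have h2 := h.mul_left (1 / 2 ^ k)
    simp_rw [one_div_mul_one_div, ← mul_pow] at h2
    exact_mod_cast h2
  obtain ⟨b, hodd⟩ : Summable (fun n : ℕ ↦ 1 / ((2 * n + 1 : ℕ) : ℝ) ^ k) :=
    h.summable.comp_injective fun _ _ h ↦ by simpa using h
  have hab : a = 1 / 2 ^ k * a + b := h.unique (heven.even_add_odd hodd)
  convert hodd using 1
  · push_cast; rfl
  · linear_combination hab

theorem dirichletLambda_two_mul {j : ℕ} (hj : j ≠ 0) :
    dirichletLambda (2 * j) = (-1) ^ (j + 1) * π ^ (2 * j) * coeff (2 * j) (xTanhHalf ℝ) / 4 := by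
  obtain ⟨i, rfl⟩ := Nat.exists_eq_add_one_of_ne_zero hj
  rw [dirichletLambda, (hasSum_one_div_two_mul_add_one_pow (hasSum_zeta_nat hj)).tsum_eq,
    coeff_xTanhHalf, if_neg (by omega), show 2 * (i + 1) - 1 = 2 * i + 1 by omega]
  field_simp
  ring

theorem lambda_recurrence_alpha_one (m : ℕ) :
    (-1 : ℝ) ^ (m + 1) * π ^ (2 * m + 2) / (4 * (Nat.factorial (2 * m + 1))) +
      ∑ k ∈ Finset.range (m + 1),
        (-1 : ℝ) ^ k * (1 + if k = 0 then (1 : ℝ) else 0) *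
          (π ^ (2 * k) / (Nat.factorial (2 * k))) *
            dirichletLambda (2 * m - 2 * k + 2) = 0 := by
  have hterm (k : ℕ) (hk : k ∈ range (m + 1)) :
      (-1 : ℝ) ^ k * (1 + if k = 0 then (1 : ℝ) else 0) *
          (π ^ (2 * k) / (Nat.factorial (2 * k))) * dirichletLambda (2 * m - 2 * k + 2) =
        (-1) ^ m * π ^ (2 * m + 2) / 4 * ((1 + if k = 0 then (1 : ℝ) else 0) /
          (2 * k).factorial * coeff (2 * m - 2 * k + 2) (xTanhHalf ℝ)) := by
    obtain ⟨d, rfl⟩ := Nat.exists_eq_add_of_le (mem_range_succ_iff.mp hk)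
    rw [show 2 * (k + d) - 2 * k + 2 = 2 * (d + 1) by omega,
      dirichletLambda_two_mul d.add_one_ne_zero]
    ring
  rw [sum_congr rfl hterm, ← mul_sum, sum_range_div_factorial_mul_coeff_xTanhHalf]
  ring
end

section
/- Let n be a positive integer and m a nonnegative integer. Then ((-1)^{m+1}/4) · ( 2·Σ_{j=1}^{n-1} (-1)^j j^{2m+1} + (-1)^n n^{2m+1} ) · π^{2m+2}/(2m+1)! + Σ_{k=0}^{m} (-1)^k ( (-1)^n n^{2k} - δ_k ) · π^{2k}/(2k)! · λ(2m-2k+2) = 0, where δ_k = 1 if k = 0 and δ_k = 0 otherwise, and 0^0 is interpreted as 1. -/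
open Real Finset

/-!
Euler's evaluation of `ζ(2k)` gives `λ(2k) = (1 - 2^{-2k}) ζ(2k) = (-1)ᵏ π^{2k} G_{2k} / (4 (2k)!)`
in terms of the Genocchi numbers `Gₙ`, whose generating function is `2t / (eᵗ + 1)`. After
dividing by `(-1)^{m+1} π^{2m+2} / 4`, the identity therefore only concerns the coefficient
`E(x)` of `t^{2m+2}` in `e^{xt} · 2t / (eᵗ + 1)`, which is the Euler polynomial
`E_{2m+1}(x) / (2m+1)!`. Multiplying by `eᵗ + 1` shows `E(x + 1) + E(x) = 2 x^{2m+1} / (2m+1)!`,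
which telescopes along the alternating sum `∑ (-1)ʲ j^{2m+1}`; since `G₀ = 0`, `G₁ = 1` and the
other odd Genocchi numbers vanish, `E(x) - x^{2m+1} / (2m+1)!` contains only even powers `x^{2k}`,
with the coefficients `G_{2m+2-2k} / (2m+2-2k)!` that multiply `λ(2m+2-2k)`.
-/

open PowerSeries
open scoped Nat

lemma Finset.sum_range_two_mul {M : Type*} [AddCommMonoid M] (f : ℕ → M) (n : ℕ) :
    ∑ i ∈ range (2 * n), f i = ∑ k ∈ range n, (f (2 * k) + f (2 * k + 1)) := by
  induction n with
  | zero => simp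
  | succ n ih => rw [mul_add_one, sum_range_succ, sum_range_succ, sum_range_succ, ih, add_assoc]

lemma Finset.sum_range_neg_one_pow_mul_of_add_eq {R : Type*} [CommRing R] {f g : ℕ → R}
    (h : ∀ j, f (j + 1) + f j = g j) (n : ℕ) :
    ∑ j ∈ range n, (-1) ^ j * g j = f 0 - (-1) ^ n * f n := by
  have htel := sum_range_sub' (fun j ↦ (-1 : R) ^ j * f j) n
  rw [pow_zero, one_mul] at htel
  rw [← htel]
  refine sum_congr rfl fun j _ ↦ ?_
  rw [← h]
  ring

lemma Finset.sum_Icc_one_sub_one_eq_sum_range {M : Type*} [AddCommMonoid M] {f : ℕ → M}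
    (h₀ : f 0 = 0) (n : ℕ) : ∑ j ∈ Icc 1 (n - 1), f j = ∑ j ∈ range n, f j :=
  sum_subset (fun j hj ↦ by grind) fun j _ hj ↦ by
    obtain rfl : j = 0 := by grind
    exact h₀

def genocchi (n : ℕ) : ℚ := 2 * (1 - 2 ^ n) * bernoulli n

@[simp] lemma genocchi_zero : genocchi 0 = 0 := by simp [genocchi]

@[simp] lemma genocchi_one : genocchi 1 = 1 := by norm_num [genocchi, bernoulli_one]

lemma genocchi_eq_zero_of_odd {n : ℕ} (hodd : Odd n) (hn : 1 < n) : genocchi n = 0 := by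
  simp [genocchi, bernoulli_eq_zero_of_odd hodd hn]

lemma PowerSeries.exp_sub_one_ne_zero (A : Type*) [CommRing A] [Algebra ℚ A] [Nontrivial A] :
    exp A - 1 ≠ 0 := fun h ↦ by
  simpa [coeff_exp] using congrArg (coeff 1) h

section GenocchiPowerSeries

variable (K : Type*) [Field K] [CharZero K]

def genocchiPowerSeries : K⟦X⟧ := mk fun n ↦ (genocchi n : K) / n !

lemma genocchiPowerSeries_eq_bernoulliPowerSeries :
    genocchiPowerSeries K = 2 * (bernoulliPowerSeries K - rescale 2 (bernoulliPowerSeries K)) := by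
  ext n
  rw [← map_ofNat C 2, coeff_C_mul]
  simp [genocchiPowerSeries, bernoulliPowerSeries, coeff_rescale, genocchi]
  ring

-- After multiplying by `eᵗ - 1`, this is `B(t) (eᵗ - 1) = t` at `t` and at `2t`,
-- since `e^{2t} - 1 = (eᵗ - 1)(eᵗ + 1)`.
lemma genocchiPowerSeries_mul_exp_add_one : genocchiPowerSeries K * (exp K + 1) = 2 * X := by
  have hB := bernoulliPowerSeries_mul_exp_sub_one K
  have hB₂ : rescale 2 (bernoulliPowerSeries K) * (exp K ^ 2 - 1) = 2 * X := by
    have h := congrArg (rescale (2 : K)) hB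
    rwa [map_mul, map_sub, map_one, rescale_X, map_ofNat, ← Nat.cast_ofNat,
      ← exp_pow_eq_rescale_exp] at h
  refine mul_right_cancel₀ (exp_sub_one_ne_zero K) ?_
  rw [genocchiPowerSeries_eq_bernoulliPowerSeries]
  linear_combination 2 * (exp K + 1) * hB - 2 * hB₂

variable {K}

lemma coeff_rescale_exp_mul_genocchiPowerSeries (x : K) (p : ℕ) :
    coeff p (rescale x (exp K) * genocchiPowerSeries K) =
      ∑ j ∈ range (p + 1), x ^ j / j ! * (genocchi (p - j) / (p - j)!) := by
  rw [coeff_mul, Nat.sum_antidiagonal_eq_sum_range_succ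
    (fun i j ↦ coeff i (rescale x (exp K)) * coeff j (genocchiPowerSeries K))]
  simp [coeff_rescale, coeff_exp, genocchiPowerSeries, div_eq_mul_inv]

lemma coeff_rescale_exp_mul_genocchiPowerSeries_add_one (x : K) (p : ℕ) :
    coeff (p + 1) (rescale (x + 1) (exp K) * genocchiPowerSeries K) +
      coeff (p + 1) (rescale x (exp K) * genocchiPowerSeries K) = 2 * (x ^ p / p !) := by
  have h : rescale (x + 1) (exp K) * genocchiPowerSeries K +
      rescale x (exp K) * genocchiPowerSeries K = X * (C 2 * rescale x (exp K)) := by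
    rw [← exp_mul_exp_eq_exp_add, rescale_one, map_ofNat]
    linear_combination rescale x (exp K) * genocchiPowerSeries_mul_exp_add_one K
  rw [← map_add, h, coeff_succ_X_mul, coeff_C_mul, coeff_rescale, coeff_exp]
  simp [div_eq_mul_inv]

/-- `(E_{2m+1}(x) - x^{2m+1}) / (2m+1)!`, where `Eₙ` is the `n`-th Euler polynomial. -/
def evenEulerSum (m : ℕ) (x : K) : K :=
  ∑ k ∈ range (m + 1), x ^ (2 * k) / (2 * k)! * (genocchi (2 * (m - k + 1)) / (2 * (m - k + 1))!)

lemma coeff_rescale_exp_mul_genocchiPowerSeries_two_mul_add_two (m : ℕ) (x : K) :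
    coeff (2 * m + 2) (rescale x (exp K) * genocchiPowerSeries K) =
      x ^ (2 * m + 1) / (2 * m + 1)! + evenEulerSum m x := by
  rw [coeff_rescale_exp_mul_genocchiPowerSeries, sum_range_succ, Nat.sub_self, genocchi_zero,
    ← mul_add_one, sum_range_two_mul, sum_add_distrib]
  have hodd : ∑ k ∈ range (m + 1), x ^ (2 * k + 1) / (2 * k + 1)! *
      (genocchi (2 * (m + 1) - (2 * k + 1)) / (2 * (m + 1) - (2 * k + 1))! : K) =
        x ^ (2 * m + 1) / (2 * m + 1)! := by
    rw [sum_eq_single m]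
    · simp [show 2 * (m + 1) - (2 * m + 1) = 1 by omega]
    · intro k hmem hkm
      have hlt : k < m := by grind
      rw [genocchi_eq_zero_of_odd ⟨m - k, by omega⟩ (by omega)]
      simp
    · simp
  have heven : ∑ k ∈ range (m + 1), x ^ (2 * k) / (2 * k)! *
      (genocchi (2 * (m + 1) - 2 * k) / (2 * (m + 1) - 2 * k)! : K) = evenEulerSum m x :=
    sum_congr rfl fun k hk ↦ by rw [show 2 * (m + 1) - 2 * k = 2 * (m - k + 1) by grind]
  rw [hodd, heven]
  simp [add_comm]

lemma alternating_sum_odd_pow_eq_evenEulerSum (m n : ℕ) :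
    (2 * ∑ j ∈ Icc 1 (n - 1), (-1 : K) ^ j * (j : K) ^ (2 * m + 1) +
        (-1 : K) ^ n * (n : K) ^ (2 * m + 1)) / (2 * m + 1)! =
      evenEulerSum m 0 - (-1) ^ n * evenEulerSum m (n : K) := by
  have htel := sum_range_neg_one_pow_mul_of_add_eq
    (f := fun j : ℕ ↦ coeff (2 * m + 2) (rescale (j : K) (exp K) * genocchiPowerSeries K))
    (fun j ↦ by
      push_cast
      exact coeff_rescale_exp_mul_genocchiPowerSeries_add_one (j : K) (2 * m + 1)) n
  simp only [coeff_rescale_exp_mul_genocchiPowerSeries_two_mul_add_two, Nat.cast_zero] at htel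
  rw [zero_pow (by omega), zero_div, zero_add] at htel
  rw [sum_Icc_one_sub_one_eq_sum_range (by simp), mul_sum, add_div, sum_div,
    sum_congr rfl fun j _ ↦ by rw [mul_div_assoc, mul_div_assoc, mul_left_comm], htel]
  ring

end GenocchiPowerSeries

lemma dirichletLambda_two_mul_s7 {k : ℕ} (hk : k ≠ 0) :
    dirichletLambda (2 * k) = (-1) ^ k * π ^ (2 * k) / 4 * (genocchi (2 * k) / (2 * k)!) := by
  have hζ := hasSum_zeta_nat hk
  set ζ := (-1 : ℝ) ^ (k + 1) * 2 ^ (2 * k - 1) * π ^ (2 * k) * bernoulli (2 * k) / (2 * k)!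
  have heven : HasSum (fun i : ℕ ↦ 1 / ((2 * i : ℕ) : ℝ) ^ (2 * k)) (ζ / 2 ^ (2 * k)) := by
    refine (hζ.div_const (2 ^ (2 * k))).congr_fun fun i ↦ ?_
    push_cast
    rw [mul_pow, div_div, mul_comm]
  have hodd :
      HasSum (fun i : ℕ ↦ 1 / ((2 * i + 1 : ℕ) : ℝ) ^ (2 * k)) (dirichletLambda (2 * k)) := by
    have hs : Summable fun i : ℕ ↦ 1 / ((2 * i + 1 : ℕ) : ℝ) ^ (2 * k) :=
      hζ.summable.comp_injective (i := fun i ↦ 2 * i + 1) fun a b h ↦ by simpa using h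
    convert hs.hasSum using 1
    simp [dirichletLambda]
  have hsplit :=
    (HasSum.even_add_odd (f := fun n : ℕ ↦ 1 / (n : ℝ) ^ (2 * k)) heven hodd).unique hζ
  have hpow : (2 : ℝ) ^ (2 * k) = 2 * 2 ^ (2 * k - 1) := (mul_pow_sub_one (by omega) 2).symm
  rw [eq_sub_of_add_eq' hsplit]
  simp only [ζ, genocchi]
  push_cast
  rw [hpow]
  field_simp
  ring

lemma neg_one_pow_mul_dirichletLambda {m k : ℕ} (hk : k ≤ m) :
    (-1) ^ k * (π ^ (2 * k) / (2 * k)!) * dirichletLambda (2 * m - 2 * k + 2) =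
      (-1) ^ (m + 1) * π ^ (2 * m + 2) / 4 *
        (1 / (2 * k)! * (genocchi (2 * (m - k + 1)) / (2 * (m - k + 1))!)) := by
  have hsign : (-1 : ℝ) ^ (m + 1) = (-1) ^ k * (-1) ^ (m - k + 1) := by
    rw [← pow_add]
    congr 1
    omega
  have hπ : π ^ (2 * m + 2) = π ^ (2 * k) * π ^ (2 * (m - k + 1)) := by
    rw [← pow_add]
    congr 1
    omega
  rw [show 2 * m - 2 * k + 2 = 2 * (m - k + 1) by omega, dirichletLambda_two_mul_s7 (by omega),
    hsign, hπ]
  ring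

lemma sum_neg_one_pow_mul_dirichletLambda_eq (m n : ℕ) :
    ∑ k ∈ range (m + 1),
        (-1 : ℝ) ^ k * ((-1 : ℝ) ^ n * (n : ℝ) ^ (2 * k) - if k = 0 then 1 else 0) *
          (π ^ (2 * k) / (2 * k)!) * dirichletLambda (2 * m - 2 * k + 2) =
      (-1) ^ (m + 1) * π ^ (2 * m + 2) / 4 *
        ((-1) ^ n * evenEulerSum m (n : ℝ) - evenEulerSum m 0) := by
  rw [evenEulerSum, evenEulerSum, mul_sum, ← sum_sub_distrib, mul_sum]
  refine sum_congr rfl fun k hk ↦ ?_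
  have hδ : (if k = 0 then (1 : ℝ) else 0) = 0 ^ (2 * k) := by
    rcases eq_or_ne k 0 with rfl | hk <;> simp [*]
  rw [hδ]
  linear_combination ((-1 : ℝ) ^ n * (n : ℝ) ^ (2 * k) - 0 ^ (2 * k)) *
    neg_one_pow_mul_dirichletLambda (Nat.lt_succ_iff.mp (mem_range.mp hk))

theorem lambda_recurrence_integer_odd_general (n m : ℕ) :
    (-1 : ℝ) ^ (m + 1) / 4 *
        (2 * ∑ j ∈ Finset.Icc 1 (n - 1), (-1 : ℝ) ^ j * (j : ℝ) ^ (2 * m + 1) +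
          (-1 : ℝ) ^ n * (n : ℝ) ^ (2 * m + 1)) * (π ^ (2 * m + 2) / (Nat.factorial (2 * m + 1))) +
      ∑ k ∈ Finset.range (m + 1),
        (-1 : ℝ) ^ k * ((-1 : ℝ) ^ n * (n : ℝ) ^ (2 * k) - if k = 0 then (1 : ℝ) else 0) *
          (π ^ (2 * k) / (Nat.factorial (2 * k))) *
            dirichletLambda (2 * m - 2 * k + 2) = 0 := by
  rw [sum_neg_one_pow_mul_dirichletLambda_eq]
  linear_combination (-1 : ℝ) ^ (m + 1) * π ^ (2 * m + 2) / 4 *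
    alternating_sum_odd_pow_eq_evenEulerSum (K := ℝ) m n

theorem lambda_recurrence_integer_odd (n m : ℕ) (hn : 0 < n) :
    (-1 : ℝ) ^ (m + 1) / 4 *
        (2 * ∑ j ∈ Finset.Icc 1 (n - 1), (-1 : ℝ) ^ j * (j : ℝ) ^ (2 * m + 1) +
          (-1 : ℝ) ^ n * (n : ℝ) ^ (2 * m + 1)) * (π ^ (2 * m + 2) / (Nat.factorial (2 * m + 1))) +
      ∑ k ∈ Finset.range (m + 1),
        (-1 : ℝ) ^ k * ((-1 : ℝ) ^ n * (n : ℝ) ^ (2 * k) - if k = 0 then (1 : ℝ) else 0) *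
          (π ^ (2 * k) / (Nat.factorial (2 * k))) *
            dirichletLambda (2 * m - 2 * k + 2) = 0 :=
  lambda_recurrence_integer_odd_general n m
end
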